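/- arXiv:math/0605085 — 3 statements merged into one kernel-verified Lean document; each statement's English description precedes it below -/
import Mathlib

section
/- Let W be a 5-dimensional vector space over ℂ and let α ∈ ⋀³W be nonzero. Then there exist a nonzero vector v ∈ W and an element β ∈ ⋀²W such that α = v∧β (every 3-vector on a 5-dimensional space is divisible by a nonzero vector). -/
/-!
Let `A ∈ ⋀ᵏ⁺¹W` with `dim W = k + 3` odd. Composed with a functional that is injective on the
line `⋀ᵏ⁺³W`, the form `(u, w) ↦ u ∧ A ∧ w` is alternating on an odd-dimensional space, hence
degenerate: some `v ≠ 0` has `u ∧ A ∧ v = 0` for all `u`. The form `x = A ∧ v` has degree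
`n = dim W - 1` and `eᵢ ∧ x = 0` for a basis `(eᵢ)`, so `x = eᵢ ∧ (eᵢ* ⌋ x)` for every `i`;
summing, Euler's identity `∑ eᵢ ∧ (eᵢ* ⌋ x) = n • x` becomes `(n + 1) • x = n • x`, so `x = 0`.
Hence `v ∧ A = ±A ∧ v = 0`, and contracting with any `f` such that `f v = 1` gives
`A = v ∧ (f ⌋ A)`.
-/

theorem LinearMap.BilinForm.IsAlt.exists_ne_zero_forall_apply_eq_zero {K V : Type*} [Field K]
    [NeZero (2 : K)] [AddCommGroup V] [Module K V] [FiniteDimensional K V]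
    {B : LinearMap.BilinForm K V} (hB : B.IsAlt) (hV : Odd (Module.finrank K V)) :
    ∃ v ≠ 0, ∀ u, B u v = 0 := by
  by_contra! h
  have hnd : B.Nondegenerate := hB.isRefl.nondegenerate_iff_separatingRight.mpr
    fun v hv => by_contra fun hne => let ⟨u, hu⟩ := h v hne; hu (hv u)
  let b := Module.finBasis K V
  set G := LinearMap.BilinForm.toMatrix b B
  have hG : G.transpose = -G := by
    ext i j
    simp only [G, Matrix.transpose_apply, Matrix.neg_apply, LinearMap.BilinForm.toMatrix_apply]
    exact (LinearMap.IsAlt.neg hB _ _).symm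
  have hdet : G.det = -G.det :=
    calc G.det = G.transpose.det := G.det_transpose.symm
      _ = -G.det := by rw [hG, Matrix.det_neg, Fintype.card_fin, hV.neg_one_pow, neg_one_mul]
  refine (LinearMap.BilinForm.nondegenerate_iff_det_ne_zero b).mp hnd ?_
  have : (2 : K) * G.det = 0 := by linear_combination hdet
  exact (mul_eq_zero.mp this).resolve_left two_ne_zero

namespace ExteriorAlgebra

variable {R M : Type*} [CommRing R] [AddCommGroup M] [Module R M]

local infixl:70 " ⌋ " => CliffordAlgebra.contractLeft

theorem ι_mul_ι_mul (m a : M) (x : ExteriorAlgebra R M) :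
    ι R m * (ι R a * x) = -(ι R a * (ι R m * x)) := by
  rw [← mul_assoc, ← mul_assoc, eq_neg_of_add_eq_zero_left (ι_add_mul_swap m a), neg_mul]

theorem ι_mul_eq_neg_one_pow_smul_mul_ι {n : ℕ} {x : ExteriorAlgebra R M}
    (hx : x ∈ ⋀[R]^n M) (m : M) : ι R m * x = (-1 : R) ^ n • (x * ι R m) := by
  induction hx using Submodule.pow_induction_on_left' with
  | algebraMap r => simp [Algebra.commutes]
  | add x y i _ _ hx hy => rw [mul_add, hx, hy, add_mul, smul_add]
  | mem_mul a ha i x _ hx =>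
    obtain ⟨a, rfl⟩ := ha
    rw [ι_mul_ι_mul, hx, mul_smul_comm, pow_succ, mul_neg_one, neg_smul, ← mul_assoc]

theorem ι_mul_mul_ι_self {n : ℕ} {x : ExteriorAlgebra R M} (hx : x ∈ ⋀[R]^n M) (m : M) :
    ι R m * x * ι R m = 0 := by
  rw [ι_mul_eq_neg_one_pow_smul_mul_ι hx, smul_mul_assoc, mul_assoc, ι_sq_zero, mul_zero,
    smul_zero]

theorem ι_mul_mem_exteriorPower (m : M) {n : ℕ} {x : ExteriorAlgebra R M}
    (hx : x ∈ ⋀[R]^n M) : ι R m * x ∈ ⋀[R]^(n + 1) M := by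
  rw [exteriorPower, pow_succ']
  exact Submodule.mul_mem_mul (LinearMap.mem_range_self _ m) hx

theorem mul_ι_mem_exteriorPower (m : M) {n : ℕ} {x : ExteriorAlgebra R M}
    (hx : x ∈ ⋀[R]^n M) : x * ι R m ∈ ⋀[R]^(n + 1) M := by
  rw [exteriorPower, pow_succ]
  exact Submodule.mul_mem_mul hx (LinearMap.mem_range_self _ m)

theorem contractLeft_mem_exteriorPower (d : Module.Dual R M) :
    ∀ {n : ℕ} {x : ExteriorAlgebra R M}, x ∈ ⋀[R]^(n + 1) M → d ⌋ x ∈ ⋀[R]^n M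
  | 0, x, hx => by
    obtain ⟨a, rfl⟩ : x ∈ LinearMap.range (ι R) := by simpa using hx
    rw [CliffordAlgebra.contractLeft_ι]
    exact Submodule.algebraMap_mem _
  | n + 1, x, hx => by
    rw [exteriorPower, pow_succ'] at hx
    refine Submodule.mul_induction_on hx ?_ fun x y hx hy => by
      rw [map_add]; exact add_mem hx hy
    rintro _ ⟨a, rfl⟩ y hy
    rw [CliffordAlgebra.contractLeft_ι_mul]
    exact sub_mem (Submodule.smul_mem _ _ hy)
      (ι_mul_mem_exteriorPower a (contractLeft_mem_exteriorPower d hy))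

theorem sum_ι_mul_contractLeft {I : Type*} [Fintype I] (b : Module.Basis I R M) {n : ℕ}
    {x : ExteriorAlgebra R M} (hx : x ∈ ⋀[R]^n M) :
    ∑ i, ι R (b i) * (b.coord i ⌋ x) = n • x := by
  induction hx using Submodule.pow_induction_on_left' with
  | algebraMap r => simp [CliffordAlgebra.contractLeft_algebraMap]
  | add x y i _ _ hx hy => simp only [map_add, mul_add, Finset.sum_add_distrib, hx, hy, smul_add]
  | mem_mul a ha k x _ hx =>
    obtain ⟨a, rfl⟩ := ha
    have hsum : ∑ i, b.coord i a • ι R (b i) = ι R a := by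
      simp only [Module.Basis.coord_apply, ← map_smul, ← map_sum, b.sum_repr]
    calc ∑ j, ι R (b j) * (b.coord j ⌋ (ι R a * x))
        = ∑ j, (b.coord j a • ι R (b j)) * x + ι R a * ∑ j, ι R (b j) * (b.coord j ⌋ x) := by
          simp only [CliffordAlgebra.contractLeft_ι_mul, mul_sub, mul_smul_comm, smul_mul_assoc,
            Finset.sum_sub_distrib, Finset.mul_sum]
          rw [sub_eq_add_neg, ← Finset.sum_neg_distrib]
          congr! 2 with j
          exact neg_eq_iff_eq_neg.mpr (ι_mul_ι_mul (b j) a _)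
      _ = (k + 1) • (ι R a * x) := by
          rw [← Finset.sum_mul, hsum, hx, mul_smul_comm k, succ_nsmul']

theorem eq_ι_mul_contractLeft_of_ι_mul_eq_zero {d : Module.Dual R M} {m : M} (hd : d m = 1)
    {x : ExteriorAlgebra R M} (h : ι R m * x = 0) : x = ι R m * (d ⌋ x) := by
  have := congrArg (d ⌋ ·) h
  rwa [map_zero, CliffordAlgebra.contractLeft_ι_mul, hd, one_smul, sub_eq_zero] at this

theorem eq_zero_of_forall_ι_mul_eq_zero {I : Type*} [Fintype I] (b : Module.Basis I R M)
    {n : ℕ} (hn : Fintype.card I = n + 1) {x : ExteriorAlgebra R M} (hx : x ∈ ⋀[R]^n M)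
    (h : ∀ m, ι R m * x = 0) : x = 0 := by
  have hdiv i : ι R (b i) * (b.coord i ⌋ x) = x :=
    (eq_ι_mul_contractLeft_of_ι_mul_eq_zero (by simp) (h (b i))).symm
  have := sum_ι_mul_contractLeft b hx
  rwa [Finset.sum_congr rfl fun i _ => hdiv i, Finset.sum_const, Finset.card_univ, hn,
    succ_nsmul, add_eq_left] at this

section Field

variable {K W : Type*} [Field K] [AddCommGroup W] [Module K W] [FiniteDimensional K W]

variable (K W) in
theorem exists_dual_injOn_exteriorPower_finrank :
    ∃ π : Module.Dual K (ExteriorAlgebra K W), Set.InjOn π (⋀[K]^(Module.finrank K W) W) := by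
  have h : Module.finrank K (⋀[K]^(Module.finrank K W) W) = Module.finrank K K := by
    rw [exteriorPower.finrank_eq, Nat.choose_self, Module.finrank_self]
  set e := LinearEquiv.ofFinrankEq _ _ h
  obtain ⟨π, hπ⟩ := LinearMap.exists_extend e.toLinearMap
  have he (x : ExteriorAlgebra K W) (hx) : e ⟨x, hx⟩ = π x :=
    (LinearMap.congr_fun hπ ⟨x, hx⟩).symm
  exact ⟨π, fun x hx y hy hxy =>
    congrArg Subtype.val (e.injective ((he x hx).trans (hxy.trans (he y hy).symm)))⟩

theorem exists_ne_zero_ι_mul_eq_zero [NeZero (2 : K)] {k : ℕ} (hk : Even k)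
    (hdim : Module.finrank K W = k + 3) {A : ExteriorAlgebra K W} (hA : A ∈ ⋀[K]^(k + 1) W) :
    ∃ v ≠ 0, ι K v * A = 0 := by
  obtain ⟨π, hπ⟩ := exists_dual_injOn_exteriorPower_finrank K W
  let B : LinearMap.BilinForm K W := LinearMap.mk₂ K (fun u w => π (ι K u * A * ι K w))
    (by simp [add_mul]) (by simp) (by simp [mul_add]) (by simp)
  have hB : B.IsAlt := fun u => by simp [B, ι_mul_mul_ι_self hA]
  obtain ⟨v, hv, hBv⟩ :=
    hB.exists_ne_zero_forall_apply_eq_zero (by rw [hdim]; exact hk.add_odd (by decide))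
  have hmem : A * ι K v ∈ ⋀[K]^(k + 2) W := mul_ι_mem_exteriorPower v hA
  have hAv : A * ι K v = 0 := by
    refine eq_zero_of_forall_ι_mul_eq_zero (Module.finBasis K W) (by simp [hdim]) hmem
      fun u => hπ (by rw [hdim]; exact ι_mul_mem_exteriorPower u hmem) (zero_mem _) ?_
    rw [map_zero, ← mul_assoc]
    exact hBv u
  exact ⟨v, hv, by rw [ι_mul_eq_neg_one_pow_smul_mul_ι hA, hAv, smul_zero]⟩

theorem exists_eq_ι_mul_of_finrank_eq [NeZero (2 : K)] {k : ℕ} (hk : Even k)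
    (hdim : Module.finrank K W = k + 3) {A : ExteriorAlgebra K W} (hA : A ∈ ⋀[K]^(k + 1) W) :
    ∃ v ≠ 0, ∃ β ∈ ⋀[K]^k W, A = ι K v * β := by
  obtain ⟨v, hv, hvA⟩ := exists_ne_zero_ι_mul_eq_zero hk hdim hA
  obtain ⟨f, hf⟩ := Module.Projective.exists_dual_eq_one K hv
  exact ⟨v, hv, f ⌋ A, contractLeft_mem_exteriorPower f hA,
    eq_ι_mul_contractLeft_of_ι_mul_eq_zero hf hvA⟩

end Field

end ExteriorAlgebra

open ExteriorAlgebra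

theorem exists_divisor_of_wedge3_general (W : Type*) [AddCommGroup W] [Module ℂ W]
    (hdim : Module.finrank ℂ W = 5) (α : ⋀[ℂ]^3 W) :
    ∃ v : W, v ≠ 0 ∧ ∃ β : ⋀[ℂ]^2 W,
      (α : ExteriorAlgebra ℂ W) = ι ℂ v * (β : ExteriorAlgebra ℂ W) := by
  have : FiniteDimensional ℂ W := Module.finite_of_finrank_eq_succ hdim
  obtain ⟨v, hv, β, hβ, hαβ⟩ := exists_eq_ι_mul_of_finrank_eq even_two hdim α.2
  exact ⟨v, hv, ⟨β, hβ⟩, hαβ⟩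

/-- every nonzero element of `⋀³W`, for `W` a 5-dimensional complex vector
space, is divisible by a nonzero vector: `α = v ∧ β` with `0 ≠ v ∈ W` and `β ∈ ⋀²W`. -/
theorem exists_divisor_of_wedge3 (W : Type*) [AddCommGroup W] [Module ℂ W]
    [FiniteDimensional ℂ W] (hdim : Module.finrank ℂ W = 5)
    (α : ⋀[ℂ]^3 W) (hα : α ≠ 0) :
    ∃ v : W, v ≠ 0 ∧ ∃ β : ⋀[ℂ]^2 W,
      (α : ExteriorAlgebra ℂ W) = ι ℂ v * (β : ExteriorAlgebra ℂ W) :=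
  exists_divisor_of_wedge3_general W hdim α
end

section
/- The discriminant group A_L = L^∨/L of the lattice L := ℤu ⊕ Λ is isomorphic to (ℤ/2ℤ)³; more precisely, u/2, e₁/2 and e₂/2 lie in L^∨, their classes each have order 2 in L^∨/L, and L^∨ = L + ℤ(u/2) + ℤ(e₁/2) + ℤ(e₂/2), so these three classes form a basis of A_L as an 𝔽₂-vector space (in particular |A_L| = 8). -/
/-- Index type for a basis of the lattice `Λ̃ = U³ ⊕ (−E₈)² ⊕ (−2)`:
three hyperbolic planes, two copies of `−E₈`, and one rank-1 piece. -/
abbrev LamIdx : Type := (Fin 3 × Fin 2) ⊕ ((Fin 2 × Fin 8) ⊕ Fin 1)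

/-- The standard Gram matrix of the `E₈` lattice. -/
def E8mat : Matrix (Fin 8) (Fin 8) ℤ :=
  !![2, -1, 0, 0, 0, 0, 0, 0;
     -1, 2, -1, 0, 0, 0, 0, 0;
     0, -1, 2, -1, 0, 0, 0, 0;
     0, 0, -1, 2, -1, 0, 0, 0;
     0, 0, 0, -1, 2, -1, 0, -1;
     0, 0, 0, 0, -1, 2, -1, 0;
     0, 0, 0, 0, 0, -1, 2, 0;
     0, 0, 0, 0, -1, 0, 0, 2]

/-- The Gram matrix of `Λ̃ = U³ ⊕ (−E₈)² ⊕ (−2)`: block diagonal with three hyperbolic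
blocks, two `−E₈` blocks and one `(−2)` block. -/
def gram : Matrix LamIdx LamIdx ℤ := fun i j =>
  match i, j with
  | .inl (a, i), .inl (b, j) => if a = b then (if i = j then 0 else 1) else 0
  | .inr (.inl (a, i)), .inr (.inl (b, j)) => if a = b then -E8mat i j else 0
  | .inr (.inr _), .inr (.inr _) => -2
  | _, _ => 0

/-- The bilinear form `(·,·)` of the lattice `Λ̃`. -/
noncomputable def B : (LamIdx → ℤ) →ₗ[ℤ] (LamIdx → ℤ) →ₗ[ℤ] ℤ :=
  Matrix.toLinearMap₂' ℤ gram

/-- The vector `u`, of square `2`, in the first hyperbolic summand. -/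
def uu : LamIdx → ℤ := fun i =>
  if i = Sum.inl (0, 0) then 1 else if i = Sum.inl (0, 1) then 1 else 0

/-- The vector `e₁`, a generator of `u^⊥ ∩ U` in the first hyperbolic summand. -/
def ee1 : LamIdx → ℤ := fun i =>
  if i = Sum.inl (0, 0) then 1 else if i = Sum.inl (0, 1) then -1 else 0

/-- The vector `e₂`, a generator of the `(−2)` summand. -/
def ee2 : LamIdx → ℤ := fun i =>
  if i = Sum.inr (Sum.inr 0) then 1 else 0

/-- The lattice `Λ = u^⊥ ⊆ Λ̃`. -/
noncomputable def Lam : Submodule ℤ (LamIdx → ℤ) := LinearMap.ker (B.flip uu)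

/-- The sublattice `L = ℤu + u^⊥ = ℤu ⊕ Λ` of `Λ̃`. -/
noncomputable def LL : Submodule ℤ (LamIdx → ℤ) := Submodule.span ℤ {uu} ⊔ Lam

/-- The inclusion of `Λ̃` into `Λ̃ ⊗ ℚ`. -/
def toQlin : (LamIdx → ℤ) →ₗ[ℤ] (LamIdx → ℚ) where
  toFun x := fun i => (x i : ℚ)
  map_add' x y := by funext i; push_cast; simp
  map_smul' c x := by funext i; push_cast; simp

/-- The Gram matrix of `Λ̃`, over `ℚ`. -/
def gramQ : Matrix LamIdx LamIdx ℚ := fun i j => (gram i j : ℚ)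

/-- The `ℚ`-bilinear extension of the form of `Λ̃` to `Λ̃ ⊗ ℚ`. -/
noncomputable def Bq : (LamIdx → ℚ) →ₗ[ℚ] (LamIdx → ℚ) →ₗ[ℚ] ℚ :=
  Matrix.toLinearMap₂' ℚ gramQ

/-- The image of `L` in `Λ̃ ⊗ ℚ`. -/
noncomputable def Lmap : Submodule ℤ (LamIdx → ℚ) := Submodule.map toQlin LL

/-- The dual lattice `L^∨ = {x ∈ L ⊗ ℚ : (x,y) ∈ ℤ for all y ∈ L}`. -/
noncomputable def Ldual : Submodule ℤ (LamIdx → ℚ) where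
  carrier := {x | ∀ y ∈ LL, ∃ n : ℤ, Bq x (toQlin y) = n}
  add_mem' := by
    rintro a b ha hb y hy
    obtain ⟨n, hn⟩ := ha y hy
    obtain ⟨m, hm⟩ := hb y hy
    exact ⟨n + m, by rw [map_add, LinearMap.add_apply, hn, hm]; push_cast; ring⟩
  zero_mem' := fun y hy => ⟨0, by simp⟩
  smul_mem' := by
    intro c x hx y hy
    obtain ⟨n, hn⟩ := hx y hy
    refine ⟨c * n, ?_⟩
    have h1 : Bq (c • x) = c • Bq x := map_zsmul Bq c x
    rw [h1, LinearMap.smul_apply, hn]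
    push_cast
    simp


/-!
Pairing with `u` reads off `x₀ + x₁`, the sum of the coordinates in the first hyperbolic plane,
so `L = {x ∈ Λ̃ : x₀ + x₁ even}`. The vectors `u, e₁, e₂` are eigenvectors of the Gram matrix
(eigenvalues `1, -1, -2`), so for `x ∈ L^∨` the integers `(x,u), (x,e₁), (x,e₂)` give an integral
combination of `u/2, e₁/2, e₂/2` whose subtraction from `x` kills the coordinates `x₀, x₁, x_{e₂}`.
The remainder pairs integrally with every basis vector of `Λ̃` and lives in `U² ⊕ (−E₈)²`, which
is unimodular (`E8inv` is an integral inverse of the `E₈` Gram matrix), so it lies in `L`.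
Finally `a u/2 + b e₁/2 + c e₂/2 ∈ L` exactly when `a, b, c` are even, so `L^∨/L ≅ (ℤ/2)³`.
-/

open scoped Matrix

theorem Matrix.exists_intCast_eq_of_mulVec {n : Type*} [Fintype n] [DecidableEq n]
    {A H : Matrix n n ℤ} (hHA : H * A = 1) {v : n → ℚ}
    (hv : ∀ i, ∃ k : ℤ, (A.map (↑) *ᵥ v) i = k) (i : n) : ∃ k : ℤ, v i = k := by
  choose w hw using hv
  have hw' : A.map (Int.castRingHom ℚ) *ᵥ v = Int.castRingHom ℚ ∘ w := funext hw
  have hv : v = H.map (Int.castRingHom ℚ) *ᵥ (Int.castRingHom ℚ ∘ w) := by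
    rw [← hw', Matrix.mulVec_mulVec, ← Matrix.map_mul, hHA,
      Matrix.map_one _ (map_zero _) (map_one _), Matrix.one_mulVec]
  exact ⟨(H *ᵥ w) i, by rw [hv, ← RingHom.map_mulVec]; rfl⟩

theorem LinearMap.natCard_eq_of_ker_eq {R M N P : Type*} [Ring R] [AddCommGroup M] [Module R M]
    [AddCommGroup N] [Module R N] [AddCommGroup P] [Module R P] {f : M →ₗ[R] N} {g : M →ₗ[R] P}
    (hf : Function.Surjective f) (hg : Function.Surjective g) (h : ker f = ker g) :
    Nat.card N = Nat.card P :=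
  Nat.card_congr ((f.quotKerEquivOfSurjective hf).symm.trans
    ((Submodule.quotEquivOfEq _ _ h).trans (g.quotKerEquivOfSurjective hg))).toEquiv

def E8inv : Matrix (Fin 8) (Fin 8) ℤ :=
  !![2, 3, 4, 5, 6, 4, 2, 3;
     3, 6, 8, 10, 12, 8, 4, 6;
     4, 8, 12, 15, 18, 12, 6, 9;
     5, 10, 15, 20, 24, 16, 8, 12;
     6, 12, 18, 24, 30, 20, 10, 15;
     4, 8, 12, 16, 20, 14, 7, 10;
     2, 4, 6, 8, 10, 7, 4, 5;
     3, 6, 9, 12, 15, 10, 5, 8]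

theorem E8inv_mul_E8mat : E8inv * E8mat = 1 := by decide

theorem gram_isSymm : gram.IsSymm := by decide

theorem gram_mulVec_uu : gram *ᵥ uu = uu := by decide

theorem gram_mulVec_ee1 : gram *ᵥ ee1 = -ee1 := by decide

theorem gram_mulVec_ee2 : gram *ᵥ ee2 = -2 • ee2 := by decide

abbrev hyp₀ : LamIdx := .inl (0, 0)
abbrev hyp₁ : LamIdx := .inl (0, 1)
abbrev neg₂ : LamIdx := .inr (.inr 0)

theorem uu_eq_single : uu = Pi.single hyp₀ 1 + Pi.single hyp₁ 1 := by decide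

theorem ee1_eq_single : ee1 = Pi.single hyp₀ 1 - Pi.single hyp₁ 1 := by decide

theorem ee2_eq_single : ee2 = Pi.single neg₂ 1 := by decide

@[simp] theorem toQlin_apply (z : LamIdx → ℤ) (i : LamIdx) : toQlin z i = z i := rfl

theorem toQlin_single (j : LamIdx) : toQlin (Pi.single j 1) = Pi.single j 1 := by
  ext i; by_cases h : i = j <;> simp [h]

theorem gramQ_eq_map : gramQ = gram.map (Int.castRingHom ℚ) := rfl

theorem gramQ_mulVec_toQlin (v : LamIdx → ℤ) : gramQ *ᵥ toQlin v = toQlin (gram *ᵥ v) := by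
  ext i
  rw [gramQ_eq_map, toQlin_apply, ← eq_intCast (Int.castRingHom ℚ), RingHom.map_mulVec]
  rfl

theorem gramQ_mulVec_hyp (x : LamIdx → ℚ) (a : Fin 3) (i : Fin 2) :
    (gramQ *ᵥ x) (.inl (a, i)) = x (.inl (a, i.rev)) := by
  fin_cases i <;>
    simp [Matrix.mulVec, dotProduct, Fintype.sum_sum_type, Fintype.sum_prod_type, gramQ, gram,
      Fin.sum_univ_two]

theorem gramQ_mulVec_E8 (x : LamIdx → ℚ) (a : Fin 2) (k : Fin 8) :
    (gramQ *ᵥ x) (.inr (.inl (a, k))) = -(E8mat.map (↑) *ᵥ fun l => x (.inr (.inl (a, l)))) k := by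
  simp [Matrix.mulVec, dotProduct, Fintype.sum_sum_type, Fintype.sum_prod_type, gramQ, gram]

theorem Bq_apply (x y : LamIdx → ℚ) : Bq x y = x ⬝ᵥ (gramQ *ᵥ y) :=
  Matrix.toLinearMap₂'_apply' _ _ _

theorem Bq_toQlin (z y : LamIdx → ℤ) : Bq (toQlin z) (toQlin y) = B z y := by
  rw [Bq_apply, gramQ_mulVec_toQlin, B, Matrix.toLinearMap₂'_apply',
    ← eq_intCast (Int.castRingHom ℚ), RingHom.map_dotProduct]
  rfl

theorem Bq_comm (x y : LamIdx → ℚ) : Bq x y = Bq y x := by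
  rw [Bq_apply, Bq_apply, Matrix.dotProduct_mulVec, ← Matrix.mulVec_transpose, dotProduct_comm,
    gramQ_eq_map, ← Matrix.transpose_map, gram_isSymm.eq]

theorem Bq_single (x : LamIdx → ℚ) (j : LamIdx) :
    Bq x (toQlin (Pi.single j 1)) = (gramQ *ᵥ x) j := by
  rw [Bq_comm, Bq_apply, toQlin_single, single_one_dotProduct]

theorem Bq_uu (x : LamIdx → ℚ) : Bq x (toQlin uu) = x hyp₀ + x hyp₁ := by
  rw [Bq_apply, gramQ_mulVec_toQlin, gram_mulVec_uu, uu_eq_single, map_add, toQlin_single,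
    toQlin_single, dotProduct_add, dotProduct_single_one, dotProduct_single_one]

theorem Bq_ee1 (x : LamIdx → ℚ) : Bq x (toQlin ee1) = x hyp₁ - x hyp₀ := by
  rw [Bq_apply, gramQ_mulVec_toQlin, gram_mulVec_ee1, ee1_eq_single, map_neg, map_sub,
    toQlin_single, toQlin_single, dotProduct_neg, dotProduct_sub, dotProduct_single_one,
    dotProduct_single_one, neg_sub]

theorem Bq_ee2 (x : LamIdx → ℚ) : Bq x (toQlin ee2) = -2 * x neg₂ := by
  rw [Bq_apply, gramQ_mulVec_toQlin, gram_mulVec_ee2, ee2_eq_single, map_zsmul, toQlin_single,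
    dotProduct_smul, dotProduct_single_one]
  simp

theorem B_uu (z : LamIdx → ℤ) : B z uu = z hyp₀ + z hyp₁ := by
  have h := (Bq_toQlin z uu).symm.trans (Bq_uu (toQlin z))
  simp only [toQlin_apply] at h
  exact_mod_cast h

theorem B_uu_uu : B uu uu = 2 := by rw [B_uu]; rfl

theorem mem_LL_iff (z : LamIdx → ℤ) : z ∈ LL ↔ 2 ∣ z hyp₀ + z hyp₁ := by
  rw [← B_uu]
  constructor
  · intro hz
    obtain ⟨w, hw, y, hy, rfl⟩ := Submodule.mem_sup.1 hz
    obtain ⟨k, rfl⟩ := Submodule.mem_span_singleton.1 hw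
    have hy' : B y uu = 0 := hy
    rw [map_add, LinearMap.add_apply, map_smul, LinearMap.smul_apply, B_uu_uu, hy', add_zero,
      smul_eq_mul]
    exact dvd_mul_left 2 k
  · rintro ⟨k, hk⟩
    have hrest : z - k • uu ∈ Lam := by
      change B (z - k • uu) uu = 0
      rw [map_sub, LinearMap.sub_apply, map_smul, LinearMap.smul_apply, B_uu_uu, hk, smul_eq_mul,
        mul_comm, sub_self]
    have h := Submodule.add_mem_sup
      (Submodule.smul_mem _ k (Submodule.mem_span_singleton_self uu)) hrest
    rwa [add_sub_cancel] at h

theorem uu_mem_LL : uu ∈ LL := (mem_LL_iff _).2 (by decide)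

theorem ee1_mem_LL : ee1 ∈ LL := (mem_LL_iff _).2 (by decide)

theorem ee2_mem_LL : ee2 ∈ LL := (mem_LL_iff _).2 (by decide)

theorem single_mem_LL {j : LamIdx} (h₀ : j ≠ hyp₀) (h₁ : j ≠ hyp₁) : Pi.single j 1 ∈ LL :=
  (mem_LL_iff _).2 (by simp [h₀.symm, h₁.symm])

theorem toQlin_mem_Lmap {z : LamIdx → ℤ} (hz : z ∈ LL) : toQlin z ∈ Lmap :=
  Submodule.mem_map_of_mem hz

theorem exists_intCast_eq_of_mem_Lmap {x : LamIdx → ℚ} (hx : x ∈ Lmap) (i : LamIdx) :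
    ∃ k : ℤ, x i = k := by
  obtain ⟨z, -, rfl⟩ := hx
  exact ⟨z i, rfl⟩

theorem Lmap_le_Ldual : Lmap ≤ Ldual := by
  rintro _ ⟨z, -, rfl⟩ y -
  exact ⟨B z y, Bq_toQlin z y⟩

abbrev half (v : LamIdx → ℤ) : LamIdx → ℚ := (2⁻¹ : ℚ) • toQlin v

theorem Bq_half_toQlin (v y : LamIdx → ℤ) :
    Bq (half v) (toQlin y) = Bq (toQlin y) (toQlin v) / 2 := by
  rw [map_smul, LinearMap.smul_apply, Bq_comm, smul_eq_mul]
  ring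

theorem half_uu_mem_Ldual : half uu ∈ Ldual := by
  intro y hy
  obtain ⟨k, hk⟩ := (mem_LL_iff y).1 hy
  refine ⟨k, ?_⟩
  rw [Bq_half_toQlin, Bq_uu, toQlin_apply, toQlin_apply, ← Int.cast_add, hk]
  push_cast
  ring

theorem half_ee1_mem_Ldual : half ee1 ∈ Ldual := by
  intro y hy
  obtain ⟨k, hk⟩ := (mem_LL_iff y).1 hy
  refine ⟨k - y hyp₀, ?_⟩
  rw [Bq_half_toQlin, Bq_ee1, toQlin_apply, toQlin_apply, eq_sub_of_add_eq' hk]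
  push_cast
  ring

theorem half_ee2_mem_Ldual : half ee2 ∈ Ldual := by
  intro y _
  refine ⟨-y neg₂, ?_⟩
  rw [Bq_half_toQlin, Bq_ee2, toQlin_apply]
  push_cast
  ring

theorem half_notMem_Lmap {v : LamIdx → ℤ} {i : LamIdx} (hv : v i = 1) : half v ∉ Lmap := by
  intro h
  obtain ⟨k, hk⟩ := exists_intCast_eq_of_mem_Lmap h i
  have : (2 * k : ℤ) = 1 := by
    have : (2 : ℚ) * k = 1 := by rw [← hk]; simp [hv]
    exact_mod_cast this
  omega

def halfComb (a b c : ℤ) : LamIdx → ℚ := a • half uu + b • half ee1 + c • half ee2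

theorem halfComb_hyp₀ (a b c : ℤ) : halfComb a b c hyp₀ = (a + b) / 2 := by
  simp [halfComb, uu, ee1, ee2, div_eq_inv_mul, mul_add]

theorem halfComb_hyp₁ (a b c : ℤ) : halfComb a b c hyp₁ = (a - b) / 2 := by
  simp [halfComb, uu, ee1, ee2, div_eq_inv_mul, sub_eq_add_neg, mul_add]

theorem halfComb_neg₂ (a b c : ℤ) : halfComb a b c neg₂ = c / 2 := by
  simp [halfComb, uu, ee1, ee2, div_eq_inv_mul]

theorem halfComb_mem_span (a b c : ℤ) :
    halfComb a b c ∈ Submodule.span ℤ {half uu, half ee1, half ee2} := by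
  have h {v} (hv : v ∈ ({half uu, half ee1, half ee2} : Set _)) (k : ℤ) :
      k • v ∈ Submodule.span ℤ {half uu, half ee1, half ee2} :=
    Submodule.smul_mem _ k (Submodule.subset_span hv)
  exact add_mem (add_mem (h (by simp) a) (h (by simp) b)) (h (by simp) c)

theorem span_halves_le_Ldual : Submodule.span ℤ {half uu, half ee1, half ee2} ≤ Ldual := by
  rw [Submodule.span_le]
  rintro _ (rfl | rfl | rfl)
  exacts [half_uu_mem_Ldual, half_ee1_mem_Ldual, half_ee2_mem_Ldual]

theorem two_zsmul_half_mem_Lmap {v : LamIdx → ℤ} (hv : v ∈ LL) : (2 : ℤ) • half v ∈ Lmap := by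
  convert toQlin_mem_Lmap hv using 1
  ext i
  simp

theorem two_mul_zsmul_half_mem_Lmap (k : ℤ) {v : LamIdx → ℤ} (hv : v ∈ LL) :
    (2 * k) • half v ∈ Lmap := by
  rw [mul_comm, mul_smul]
  exact Lmap.smul_mem k (two_zsmul_half_mem_Lmap hv)

theorem halfComb_mem_Lmap_iff (a b c : ℤ) : halfComb a b c ∈ Lmap ↔ 2 ∣ a ∧ 2 ∣ b ∧ 2 ∣ c := by
  constructor
  · rintro ⟨z, hz, hzx⟩
    obtain ⟨m, hm⟩ := (mem_LL_iff z).1 hz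
    have h₀ := congrFun hzx hyp₀
    have h₁ := congrFun hzx hyp₁
    have h₂ := congrFun hzx neg₂
    rw [toQlin_apply, halfComb_hyp₀] at h₀
    rw [toQlin_apply, halfComb_hyp₁] at h₁
    rw [toQlin_apply, halfComb_neg₂] at h₂
    have e₀ : 2 * z hyp₀ = a + b := by exact_mod_cast (by linarith : (2 * z hyp₀ : ℚ) = a + b)
    have e₁ : 2 * z hyp₁ = a - b := by exact_mod_cast (by linarith : (2 * z hyp₁ : ℚ) = a - b)
    have e₂ : 2 * z neg₂ = c := by exact_mod_cast (by linarith : (2 * z neg₂ : ℚ) = c)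
    omega
  · rintro ⟨⟨a, rfl⟩, ⟨b, rfl⟩, ⟨c, rfl⟩⟩
    exact Lmap.add_mem (Lmap.add_mem (two_mul_zsmul_half_mem_Lmap a uu_mem_LL)
      (two_mul_zsmul_half_mem_Lmap b ee1_mem_LL)) (two_mul_zsmul_half_mem_Lmap c ee2_mem_LL)

theorem exists_toQlin_eq_of_mulVec {y : LamIdx → ℚ}
    (hy : ∀ j, ∃ n : ℤ, (gramQ *ᵥ y) j = n) (h₂ : y neg₂ = 0) : ∃ z, toQlin z = y := by
  suffices h : ∀ i, ∃ k : ℤ, y i = k by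
    choose z hz using h
    exact ⟨z, funext fun i => (hz i).symm⟩
  rintro (⟨a, i⟩ | ⟨a, k⟩ | t)
  · obtain ⟨n, hn⟩ := hy (.inl (a, i.rev))
    rw [gramQ_mulVec_hyp, Fin.rev_rev] at hn
    exact ⟨n, hn⟩
  · refine Matrix.exists_intCast_eq_of_mulVec (v := fun l => y (.inr (.inl (a, l))))
      E8inv_mul_E8mat (fun k => ?_) k
    obtain ⟨n, hn⟩ := hy (.inr (.inl (a, k)))
    rw [gramQ_mulVec_E8] at hn
    exact ⟨-n, by push_cast; linarith⟩
  · rw [Subsingleton.elim t 0]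
    exact ⟨0, by simpa using h₂⟩

theorem exists_toQlin_eq_of_mem_Ldual {y : LamIdx → ℚ} (hy : y ∈ Ldual)
    (h₀ : y hyp₀ = 0) (h₁ : y hyp₁ = 0) (h₂ : y neg₂ = 0) : ∃ z, toQlin z = y := by
  refine exists_toQlin_eq_of_mulVec (fun j => ?_) h₂
  by_cases hj₀ : j = hyp₀
  · exact ⟨0, by rw [hj₀, gramQ_mulVec_hyp]; simpa using h₁⟩
  by_cases hj₁ : j = hyp₁
  · exact ⟨0, by rw [hj₁, gramQ_mulVec_hyp]; simpa using h₀⟩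
  rw [← Bq_single]
  exact hy _ (single_mem_LL hj₀ hj₁)

theorem exists_eq_toQlin_add_halfComb {x : LamIdx → ℚ} (hx : x ∈ Ldual) :
    ∃ a b c : ℤ, ∃ z ∈ LL, x = toQlin z + halfComb a b c := by
  obtain ⟨a, ha⟩ := hx uu uu_mem_LL
  obtain ⟨b, hb⟩ := hx ee1 ee1_mem_LL
  obtain ⟨c, hc⟩ := hx ee2 ee2_mem_LL
  rw [Bq_uu] at ha
  rw [Bq_ee1] at hb
  rw [Bq_ee2] at hc
  set y := x - halfComb a (-b) (-c) with hy
  have hyL : y ∈ Ldual :=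
    Ldual.sub_mem hx (span_halves_le_Ldual (halfComb_mem_span a (-b) (-c)))
  have hy₀ : y hyp₀ = 0 := by
    rw [hy, Pi.sub_apply, halfComb_hyp₀]; push_cast; linarith
  have hy₁ : y hyp₁ = 0 := by
    rw [hy, Pi.sub_apply, halfComb_hyp₁]; push_cast; linarith
  have hy₂ : y neg₂ = 0 := by
    rw [hy, Pi.sub_apply, halfComb_neg₂]; push_cast; linarith
  obtain ⟨z, hz⟩ := exists_toQlin_eq_of_mem_Ldual hyL hy₀ hy₁ hy₂
  refine ⟨a, -b, -c, z, (mem_LL_iff z).2 ?_, by rw [hz, sub_add_cancel]⟩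
  have h₀ := (congrFun hz hyp₀).trans hy₀
  have h₁ := (congrFun hz hyp₁).trans hy₁
  rw [toQlin_apply, Int.cast_eq_zero] at h₀ h₁
  rw [h₀, h₁]
  exact dvd_zero 2

theorem Ldual_eq_Lmap_sup_span_halves :
    Ldual = Lmap ⊔ Submodule.span ℤ {half uu, half ee1, half ee2} := by
  refine le_antisymm (fun x hx => ?_) (sup_le Lmap_le_Ldual span_halves_le_Ldual)
  obtain ⟨a, b, c, z, hz, rfl⟩ := exists_eq_toQlin_add_halfComb hx
  exact add_mem (Submodule.mem_sup_left (toQlin_mem_Lmap hz))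
    (Submodule.mem_sup_right (halfComb_mem_span a b c))

theorem linearCombination_halves (f : Fin 3 → ℤ) :
    Fintype.linearCombination ℤ ![half uu, half ee1, half ee2] f = halfComb (f 0) (f 1) (f 2) := by
  rw [Fintype.linearCombination_apply, Fin.sum_univ_three]
  rfl

noncomputable def halfClass : (Fin 3 → ℤ) →ₗ[ℤ] Ldual ⧸ Lmap.comap Ldual.subtype :=
  (Lmap.comap Ldual.subtype).mkQ ∘ₗ
    (Fintype.linearCombination ℤ ![half uu, half ee1, half ee2]).codRestrict Ldual fun f => by
      rw [linearCombination_halves]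
      exact span_halves_le_Ldual (halfComb_mem_span _ _ _)

theorem halfClass_eq_zero_iff (f : Fin 3 → ℤ) : halfClass f = 0 ↔ ∀ i, 2 ∣ f i := by
  rw [halfClass, LinearMap.comp_apply, Submodule.mkQ_apply, Submodule.Quotient.mk_eq_zero,
    Submodule.mem_comap, Submodule.subtype_apply, LinearMap.codRestrict_apply,
    linearCombination_halves, halfComb_mem_Lmap_iff, Fin.forall_fin_succ, Fin.forall_fin_two]
  rfl

theorem halfClass_surjective : Function.Surjective halfClass := by
  rintro q
  obtain ⟨⟨x, hx⟩, rfl⟩ := Submodule.Quotient.mk_surjective _ q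
  obtain ⟨a, b, c, z, hz, rfl⟩ := exists_eq_toQlin_add_halfComb hx
  refine ⟨![a, b, c], ?_⟩
  rw [halfClass, LinearMap.comp_apply, Submodule.mkQ_apply, Submodule.Quotient.eq,
    Submodule.mem_comap, map_sub, Submodule.subtype_apply, Submodule.subtype_apply,
    LinearMap.codRestrict_apply, linearCombination_halves]
  simpa using Lmap.neg_mem (toQlin_mem_Lmap hz)

theorem natCard_Ldual_quotient_Lmap : Nat.card (Ldual ⧸ Lmap.comap Ldual.subtype) = 8 := by
  let red : (Fin 3 → ℤ) →ₗ[ℤ] (Fin 3 → ZMod 2) :=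
    (Int.castAddHom (ZMod 2)).toIntLinearMap.compLeft _
  have hker : LinearMap.ker halfClass = LinearMap.ker red := by
    ext f
    simp [halfClass_eq_zero_iff, red, funext_iff, ZMod.intCast_zmod_eq_zero_iff_dvd]
  rw [LinearMap.natCard_eq_of_ker_eq halfClass_surjective ZMod.intCast_surjective.comp_left hker]
  simp

/-- the discriminant group `A_L = L^∨/L` of `L = ℤu ⊕ Λ` is `(ℤ/2)³`:
`u/2, e₁/2, e₂/2` lie in `L^∨`, their classes have order 2 in `L^∨/L`,
`L^∨ = L + ℤ(u/2) + ℤ(e₁/2) + ℤ(e₂/2)`, and the three classes are independent over `𝔽₂`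
(so they form a basis of `A_L` and `|A_L| = 8`). -/
theorem discriminant_group_LL :
    ((2⁻¹ : ℚ) • toQlin uu ∈ Ldual ∧ (2⁻¹ : ℚ) • toQlin ee1 ∈ Ldual ∧
      (2⁻¹ : ℚ) • toQlin ee2 ∈ Ldual) ∧
    (((2⁻¹ : ℚ) • toQlin uu ∉ Lmap ∧ (2 : ℤ) • ((2⁻¹ : ℚ) • toQlin uu) ∈ Lmap) ∧
      ((2⁻¹ : ℚ) • toQlin ee1 ∉ Lmap ∧ (2 : ℤ) • ((2⁻¹ : ℚ) • toQlin ee1) ∈ Lmap) ∧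
      ((2⁻¹ : ℚ) • toQlin ee2 ∉ Lmap ∧ (2 : ℤ) • ((2⁻¹ : ℚ) • toQlin ee2) ∈ Lmap)) ∧
    (Ldual = Lmap ⊔ Submodule.span ℤ
      {(2⁻¹ : ℚ) • toQlin uu, (2⁻¹ : ℚ) • toQlin ee1, (2⁻¹ : ℚ) • toQlin ee2}) ∧
    (∀ a b c : ℤ,
      a • ((2⁻¹ : ℚ) • toQlin uu) + b • ((2⁻¹ : ℚ) • toQlin ee1) +
          c • ((2⁻¹ : ℚ) • toQlin ee2) ∈ Lmap →
        2 ∣ a ∧ 2 ∣ b ∧ 2 ∣ c) ∧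
    Nat.card ((↥Ldual) ⧸ (Lmap.comap Ldual.subtype)) = 8 :=
  ⟨⟨half_uu_mem_Ldual, half_ee1_mem_Ldual, half_ee2_mem_Ldual⟩,
    ⟨⟨half_notMem_Lmap (i := hyp₀) rfl, two_zsmul_half_mem_Lmap uu_mem_LL⟩,
      ⟨half_notMem_Lmap (i := hyp₀) rfl, two_zsmul_half_mem_Lmap ee1_mem_LL⟩,
      ⟨half_notMem_Lmap (i := neg₂) rfl, two_zsmul_half_mem_Lmap ee2_mem_LL⟩⟩,
    Ldual_eq_Lmap_sup_span_halves, fun a b c => (halfComb_mem_Lmap_iff a b c).1,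
    natCard_Ldual_quotient_Lmap⟩
end

section
/- Let Λ' be a free ℤ-module with symmetric bilinear form (·,·) and D ∈ Λ' with (D,D) = 10. In the Mukai lattice M(Λ') set v := (2, D, 2), w := (−1, 0, 1) and s := (5, 2D, 5). Then v, w, s are pairwise orthogonal for the Mukai pairing, ⟨v,v⟩ = 2, ⟨w,w⟩ = 2, ⟨s,s⟩ = −10, and the orthogonal complement of {v, w, s} in M(Λ') equals {(0, x, 0) : x ∈ Λ', (x,D) = 0}. -/
/-! Since `s - 2v = (1, 0, 1)`, orthogonality to `v, w, s` is orthogonality to `v`, `w = (-1, 0, 1)`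
and `(1, 0, 1)`. The last two span the hyperbolic plane `ℤ ⊕ 0 ⊕ ℤ` rationally, so they force
`m = (0, x, 0)`, and then `⟨m, v⟩ = (x, D)`. -/

/-- The Mukai pairing `⟨(a,b,c),(a',b',c')⟩ = (b,b') − a·c' − c·a'` on the Mukai lattice
`M(Λ') = ℤ ⊕ Λ' ⊕ ℤ` of a lattice `Λ'`. -/
def mukaiZ {Λ' : Type*} [AddCommGroup Λ'] [Module ℤ Λ']
    (B : Λ' →ₗ[ℤ] Λ' →ₗ[ℤ] ℤ) (p q : ℤ × Λ' × ℤ) : ℤ :=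
  B p.2.1 q.2.1 - p.1 * q.2.2 - p.2.2 * q.1

section MukaiPairing

variable {Λ' : Type*} [AddCommGroup Λ'] [Module ℤ Λ'] (B : Λ' →ₗ[ℤ] Λ' →ₗ[ℤ] ℤ)

lemma mukaiZ_add_right (p q q' : ℤ × Λ' × ℤ) :
    mukaiZ B p (q + q') = mukaiZ B p q + mukaiZ B p q' := by
  simp only [mukaiZ, Prod.fst_add, Prod.snd_add, map_add]
  ring

lemma mukaiZ_smul_right (n : ℤ) (p q : ℤ × Λ' × ℤ) :
    mukaiZ B p (n • q) = n * mukaiZ B p q := by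
  simp only [mukaiZ, Prod.smul_fst, Prod.smul_snd, map_zsmul, smul_eq_mul]
  ring

lemma mukaiZ_orthogonal_hyperbolic_iff (m : ℤ × Λ' × ℤ) :
    mukaiZ B m (-1, 0, 1) = 0 ∧ mukaiZ B m (1, 0, 1) = 0 ↔ m.1 = 0 ∧ m.2.2 = 0 := by
  simp only [mukaiZ, map_zero, sub_eq_zero]
  omega

lemma mukaiZ_zero_mk_left (x b : Λ') (a c : ℤ) : mukaiZ B (0, x, 0) (a, b, c) = B x b := by
  simp [mukaiZ]

end MukaiPairing

theorem mukai_orthogonal_complement_general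
    (Λ' : Type*) [AddCommGroup Λ'] [Module ℤ Λ']
    (B : Λ' →ₗ[ℤ] Λ' →ₗ[ℤ] ℤ)
    (D : Λ') (hD : B D D = 10) :
    mukaiZ B ((2 : ℤ), D, (2 : ℤ)) ((-1 : ℤ), 0, (1 : ℤ)) = 0 ∧
    mukaiZ B ((2 : ℤ), D, (2 : ℤ)) ((5 : ℤ), (2 : ℤ) • D, (5 : ℤ)) = 0 ∧
    mukaiZ B ((-1 : ℤ), 0, (1 : ℤ)) ((5 : ℤ), (2 : ℤ) • D, (5 : ℤ)) = 0 ∧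
    mukaiZ B ((2 : ℤ), D, (2 : ℤ)) ((2 : ℤ), D, (2 : ℤ)) = 2 ∧
    mukaiZ B ((-1 : ℤ), 0, (1 : ℤ)) ((-1 : ℤ), 0, (1 : ℤ)) = 2 ∧
    mukaiZ B ((5 : ℤ), (2 : ℤ) • D, (5 : ℤ)) ((5 : ℤ), (2 : ℤ) • D, (5 : ℤ)) = -10 ∧
    ∀ m : ℤ × Λ' × ℤ,
      (mukaiZ B m ((2 : ℤ), D, (2 : ℤ)) = 0 ∧
        mukaiZ B m ((-1 : ℤ), 0, (1 : ℤ)) = 0 ∧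
        mukaiZ B m ((5 : ℤ), (2 : ℤ) • D, (5 : ℤ)) = 0) ↔
      ∃ x : Λ', B x D = 0 ∧ m = ((0 : ℤ), x, (0 : ℤ)) := by
  refine ⟨?_, ?_, ?_, ?_, ?_, ?_, fun m => ?_⟩
  iterate 6 norm_num [mukaiZ, hD]
  have s_eq : ((5 : ℤ), (2 : ℤ) • D, (5 : ℤ)) = (2 : ℤ) • ((2 : ℤ), D, (2 : ℤ)) + (1, 0, 1) := by
    ext <;> simp
  rw [s_eq, mukaiZ_add_right, mukaiZ_smul_right]
  constructor
  · rintro ⟨hv, hw, hs⟩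
    obtain ⟨ha, hc⟩ := (mukaiZ_orthogonal_hyperbolic_iff B m).1 ⟨hw, by linarith⟩
    obtain ⟨a, x, c⟩ := m
    subst ha hc
    exact ⟨x, by rwa [mukaiZ_zero_mk_left] at hv, rfl⟩
  · rintro ⟨x, hx, rfl⟩
    norm_num [mukaiZ_zero_mk_left, hx]

/-- let `Λ'` be a lattice and `D ∈ Λ'` with `(D,D) = 10`.  In the Mukai
lattice set `v = (2,D,2)`, `w = (−1,0,1)`, `s = (5,2D,5)`.  Then `v,w,s` are pairwise
orthogonal, `⟨v,v⟩ = 2`, `⟨w,w⟩ = 2`, `⟨s,s⟩ = −10`, and the orthogonal complement of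
`{v,w,s}` in `M(Λ')` is `{(0,x,0) : x ∈ Λ', (x,D) = 0}`. -/
theorem mukai_orthogonal_complement
    (Λ' : Type*) [AddCommGroup Λ'] [Module ℤ Λ'] [Module.Free ℤ Λ'] [Module.Finite ℤ Λ']
    (B : Λ' →ₗ[ℤ] Λ' →ₗ[ℤ] ℤ) (hsymm : ∀ x y : Λ', B x y = B y x)
    (D : Λ') (hD : B D D = 10) :
    mukaiZ B ((2 : ℤ), D, (2 : ℤ)) ((-1 : ℤ), 0, (1 : ℤ)) = 0 ∧
    mukaiZ B ((2 : ℤ), D, (2 : ℤ)) ((5 : ℤ), (2 : ℤ) • D, (5 : ℤ)) = 0 ∧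
    mukaiZ B ((-1 : ℤ), 0, (1 : ℤ)) ((5 : ℤ), (2 : ℤ) • D, (5 : ℤ)) = 0 ∧
    mukaiZ B ((2 : ℤ), D, (2 : ℤ)) ((2 : ℤ), D, (2 : ℤ)) = 2 ∧
    mukaiZ B ((-1 : ℤ), 0, (1 : ℤ)) ((-1 : ℤ), 0, (1 : ℤ)) = 2 ∧
    mukaiZ B ((5 : ℤ), (2 : ℤ) • D, (5 : ℤ)) ((5 : ℤ), (2 : ℤ) • D, (5 : ℤ)) = -10 ∧
    ∀ m : ℤ × Λ' × ℤ,
      (mukaiZ B m ((2 : ℤ), D, (2 : ℤ)) = 0 ∧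
        mukaiZ B m ((-1 : ℤ), 0, (1 : ℤ)) = 0 ∧
        mukaiZ B m ((5 : ℤ), (2 : ℤ) • D, (5 : ℤ)) = 0) ↔
      ∃ x : Λ', B x D = 0 ∧ m = ((0 : ℤ), x, (0 : ℤ)) :=
  mukai_orthogonal_complement_general Λ' B D hD
end
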